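/- arXiv:1907.10720 — 6 statements merged into one kernel-verified Lean document; each statement's English description precedes it below -/
import Mathlib

section
/- Let δ, μ, σ > 0. If two high-frequency traders with speeds λ_i, λ_{-i} > 0 quote an ask price such that the market-maker payoff -(δ/(δ+μ))·(λ_{-i}/(λ_i+λ_{-i}))·(σ - ask) + (μ/(δ+μ))·ask equals the bandit payoff (δ/(δ+μ))·(λ_i/(λ_i+λ_{-i}))·(σ - ask), then ask = δσ/(δ+μ), independently of λ_i and λ_{-i}. -/
/-!
The speeds enter only through the winning probabilities `λ_B / (λ_B + λ_M)` and
`λ_M / (λ_B + λ_M)`, which sum to one. Hence the market-maker's sniping loss and the bandit's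
sniping gain add up to the whole expected news loss `δ/(δ+μ) · (σ - ask)`, and equal payoffs
reduce to the zero-profit condition `μ · ask = δ · (σ - ask)` of a single liquidity provider.
-/

lemma div_add_div_add_eq_one {a b : ℝ} (hab : a + b ≠ 0) : a / (a + b) + b / (a + b) = 1 := by
  rw [← add_div, div_self hab]

lemma eq_mul_div_of_div_mul_eq_div_mul_sub {d m s a : ℝ} (hdm : d + m ≠ 0)
    (h : m / (d + m) * a = d / (d + m) * (s - a)) : a = d * s / (d + m) := by
  rw [eq_div_iff hdm]
  field_simp at h
  linarith

theorem stmt_0_general (δ μ σ ask li lmi : ℝ)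
    (hδ : 0 < δ) (hμ : 0 < μ) (hli : 0 < li) (hlmi : 0 < lmi)
    (h : -(δ / (δ + μ)) * (lmi / (li + lmi)) * (σ - ask) + (μ / (δ + μ)) * ask
        = (δ / (δ + μ)) * (li / (li + lmi)) * (σ - ask)) :
    ask = δ * σ / (δ + μ) := by
  have hwin : li / (li + lmi) + lmi / (li + lmi) = 1 := div_add_div_add_eq_one (by positivity)
  have hzero : μ / (δ + μ) * ask = δ / (δ + μ) * (σ - ask) := by
    linear_combination h + δ / (δ + μ) * (σ - ask) * hwin
  exact eq_mul_div_of_div_mul_eq_div_mul_sub (by positivity) hzero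

theorem stmt_0 (δ μ σ ask li lmi : ℝ)
    (hδ : 0 < δ) (hμ : 0 < μ) (hσ : 0 < σ) (hli : 0 < li) (hlmi : 0 < lmi)
    (h : -(δ / (δ + μ)) * (lmi / (li + lmi)) * (σ - ask) + (μ / (δ + μ)) * ask
        = (δ / (δ + μ)) * (li / (li + lmi)) * (σ - ask)) :
    ask = δ * σ / (δ + μ) :=
  stmt_0_general δ μ σ ask li lmi hδ hμ hli hlmi h
end

section
/- Let δ, μ, σ, κ > 0 and define π(λ_i, λ_{-i}) = (λ_i/(λ_i+λ_{-i}))·δμσ/(δ+μ)² − (1/(δ+μ) + (δ/(δ+μ))·1/(λ_i+λ_{-i}))·λ_i·κ·(λ_i+λ_{-i}). Then the unique symmetric solution λ_i = λ_{-i} = λ > 0 of the first-order condition ∂π/∂λ_i = 0 is λ = (−δ + √(δ² + 3δμσ/(κ(δ+μ))))/6. -/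
/-! Since the processor rental time multiplies `λᵢ + λ₋ᵢ`, the cost term is
`κ λᵢ (λᵢ + λ₋ᵢ) / (δ + μ) + δ κ λᵢ / (δ + μ)`. At a symmetric point `λᵢ = λ₋ᵢ = l` the first-order
condition therefore reads `δμσ / (δ + μ) = 4 κ l (3 l + δ)`, and completing the square turns it into
`(6 l + δ)² = δ² + 3 δμσ / (κ (δ + μ))`, whose only solution with `6 l + δ > 0` is the claimed one. -/

noncomputable def piPC (δ μ σ κ : ℝ) (li lmi : ℝ) : ℝ :=
  (li / (li + lmi)) * (δ * μ * σ / (δ + μ) ^ 2)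
    - (1 / (δ + μ) + (δ / (δ + μ)) * (1 / (li + lmi))) * (li * κ * (li + lmi))

theorem hasDerivAt_piPC (δ μ σ κ : ℝ) {x m : ℝ} (hxm : x + m ≠ 0) :
    HasDerivAt (fun y => piPC δ μ σ κ y m)
      (m / (x + m) ^ 2 * (δ * μ * σ / (δ + μ) ^ 2)
        - (1 / (δ + μ) * κ * (2 * x + m) + δ / (δ + μ) * κ)) x := by
  have hshift : HasDerivAt (fun y : ℝ => y + m) 1 x := (hasDerivAt_id x).add_const m
  have hshare := (hasDerivAt_id x).div hshift hxm
  have hcost := ((hasDerivAt_const x (1 / (δ + μ))).add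
      (((hasDerivAt_const x (1 : ℝ)).div hshift hxm).const_mul (δ / (δ + μ)))).mul
    (((hasDerivAt_id x).mul_const κ).mul hshift)
  unfold piPC
  refine ((hshare.mul_const (δ * μ * σ / (δ + μ) ^ 2)).sub hcost).congr_deriv ?_
  simp only [Pi.add_apply, Pi.mul_apply, Pi.div_apply, id]
  -- `δ + μ` may vanish, so only `x + m` is cleared from denominators.
  generalize δ * μ * σ / (δ + μ) ^ 2 = A
  generalize 1 / (δ + μ) = c
  generalize δ / (δ + μ) = d
  field_simp
  ring

theorem deriv_piPC_symm (δ μ σ κ : ℝ) {l : ℝ} (hl : l ≠ 0) :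
    deriv (fun x => piPC δ μ σ κ x l) l =
      δ * μ * σ / (4 * l * (δ + μ) ^ 2) - κ * (3 * l + δ) / (δ + μ) := by
  have hll : l + l ≠ 0 := by simpa [← two_mul] using hl
  rw [(hasDerivAt_piPC δ μ σ κ hll).deriv]
  field_simp
  ring

theorem symm_foc_iff_mul_self {δ μ σ κ l : ℝ} (hδμ : 0 < δ + μ) (hκ : 0 < κ) (hl : 0 < l) :
    δ * μ * σ / (4 * l * (δ + μ) ^ 2) - κ * (3 * l + δ) / (δ + μ) = 0 ↔
      (6 * l + δ) * (6 * l + δ) = δ ^ 2 + 3 * δ * μ * σ / (κ * (δ + μ)) := by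
  rw [sub_eq_zero]
  field_simp
  constructor <;> intro h <;> linarith

theorem stmt_2_general (δ μ σ κ : ℝ) (hδ : 0 < δ) (hμ : 0 < μ) (hκ : 0 < κ) :
    ∀ l : ℝ, 0 < l →
      (deriv (fun x => piPC δ μ σ κ x l) l = 0 ↔
        l = (-δ + Real.sqrt (δ ^ 2 + 3 * δ * μ * σ / (κ * (δ + μ)))) / 6) := by
  intro l hl
  rw [deriv_piPC_symm δ μ σ κ hl.ne', symm_foc_iff_mul_self (by positivity) hκ hl,
    ← Real.sqrt_eq_iff_mul_self_eq_of_pos (by positivity : 0 < 6 * l + δ), eq_comm]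
  constructor <;> intro h <;> linarith

theorem stmt_2 (δ μ σ κ : ℝ) (hδ : 0 < δ) (hμ : 0 < μ) (hσ : 0 < σ) (hκ : 0 < κ) :
    ∀ l : ℝ, 0 < l →
      (deriv (fun x => piPC δ μ σ κ x l) l = 0 ↔
        l = (-δ + Real.sqrt (δ ^ 2 + 3 * δ * μ * σ / (κ * (δ + μ)))) / 6) :=
  stmt_2_general δ μ σ κ hδ hμ hκ
end

section
/- Let δ, μ, σ, κ > 0. Define λ_PC = (−δ + √(δ² + 3δμσ/(κ(δ+μ))))/6 and λ_OD = μσ/(4κ(δ+μ)). Then λ_OD > λ_PC. -/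
/-! Writing `b = 3μσ / (2κ(δ + μ))`, the radicand of `λ_PC` is `δ² + 2δb`, which falls short of
`(δ + b)²` by `b²`. Hence `6 λ_PC = √(δ² + 2δb) - δ < b = 6 λ_OD`. -/

theorem Real.sqrt_sq_add_two_mul_lt {d b : ℝ} (hdb : 0 < d + b) (hb : b ≠ 0) :
    √(d ^ 2 + 2 * d * b) < d + b := by
  rw [Real.sqrt_lt' hdb]
  nlinarith [sq_pos_of_ne_zero hb]

theorem stmt_5 (δ μ σ κ : ℝ) (hδ : 0 < δ) (hμ : 0 < μ) (hσ : 0 < σ) (hκ : 0 < κ) :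
    μ * σ / (4 * κ * (δ + μ)) >
      (-δ + Real.sqrt (δ ^ 2 + 3 * δ * μ * σ / (κ * (δ + μ)))) / 6 := by
  set b := 3 * μ * σ / (2 * κ * (δ + μ)) with hb_def
  have hb : 0 < b := by positivity
  have h_radicand : δ ^ 2 + 3 * δ * μ * σ / (κ * (δ + μ)) = δ ^ 2 + 2 * δ * b := by
    rw [hb_def]; field_simp
  have h_od : μ * σ / (4 * κ * (δ + μ)) = b / 6 := by
    rw [hb_def]; field_simp; ring
  rw [h_radicand, h_od]
  linarith [Real.sqrt_sq_add_two_mul_lt (by linarith : 0 < δ + b) hb.ne']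
end

section
/- Let δ, μ, σ, κ > 0 and let λ_PC = (−δ + √(δ² + 3δμσ/(κ(δ+μ))))/6 and λ_OD = μσ/(4κ(δ+μ)). Then the equilibrium clearing price of computing power, p(λ) = 2κλ, is strictly higher in the decentralized market: 2κλ_OD > 2κλ_PC. -/
/-! With `A = μσ / (κ(δ + μ))` one has `λ_OD = A / 4` and `λ_PC = (-δ + √(δ² + 3δA)) / 6`, so the
claim reduces to `√(δ² + 3δA) < δ + 3A/2`, which holds because `(δ + 3A/2)² = δ² + 3δA + 9A²/4`. -/

lemma Real.sqrt_sq_add_two_mul_lt_add {a b : ℝ} (ha : 0 ≤ a) (hb : 0 < b) :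
    √(a ^ 2 + 2 * a * b) < a + b := by
  rw [Real.sqrt_lt' (by linarith)]
  nlinarith

lemma neg_add_sqrt_sq_add_three_mul_div_six_lt {d A : ℝ} (hd : 0 ≤ d) (hA : 0 < A) :
    (-d + √(d ^ 2 + 3 * d * A)) / 6 < A / 4 := by
  have hsqrt : √(d ^ 2 + 2 * d * (3 * A / 2)) < d + 3 * A / 2 :=
    Real.sqrt_sq_add_two_mul_lt_add hd (by positivity)
  rw [show 2 * d * (3 * A / 2) = 3 * d * A by ring] at hsqrt
  linarith

theorem stmt_6 (δ μ σ κ : ℝ) (hδ : 0 < δ) (hμ : 0 < μ) (hσ : 0 < σ) (hκ : 0 < κ) :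
    2 * κ * (μ * σ / (4 * κ * (δ + μ))) >
      2 * κ * ((-δ + Real.sqrt (δ ^ 2 + 3 * δ * μ * σ / (κ * (δ + μ)))) / 6) := by
  have hδμ : 0 < δ + μ := by linarith
  set A := μ * σ / (κ * (δ + μ)) with hA
  have hOD : μ * σ / (4 * κ * (δ + μ)) = A / 4 := by
    rw [hA]; field_simp
  have hPC : 3 * δ * μ * σ / (κ * (δ + μ)) = 3 * δ * A := by
    rw [hA]; field_simp
  rw [hOD, hPC]
  exact mul_lt_mul_of_pos_left
    (neg_add_sqrt_sq_add_three_mul_div_six_lt hδ.le (by positivity)) (by positivity)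
end

section
/- Let δ, μ, σ, κ > 0 and λ_PC = (−δ + √(δ² + 3δμσ/(κ(δ+μ))))/6, λ_OD = μσ/(4κ(δ+μ)). Then 1/(2λ_PC) > 1/(2λ_OD); i.e., the expected time from news arrival to the first order arrival is strictly shorter under on-demand speed. -/
theorem Real.sqrt_sq_add_two_mul_lt_s7 {d x : ℝ} (hd : 0 ≤ d) (hx : 0 < x) :
    √(d ^ 2 + 2 * d * x) < d + x := by
  rw [Real.sqrt_lt' (by positivity)]
  nlinarith

/-- With `a = μσ/(κ(δ+μ))`, the centralized speed is `(-δ + √(δ² + 3δa))/6` and the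
on-demand speed is `a/4`. -/
theorem centralized_speed_pos_and_lt {d a : ℝ} (hd : 0 < d) (ha : 0 < a) :
    0 < (-d + √(d ^ 2 + 3 * d * a)) / 6 ∧ (-d + √(d ^ 2 + 3 * d * a)) / 6 < a / 4 := by
  have hd_lt : d < √(d ^ 2 + 3 * d * a) := by
    rw [Real.lt_sqrt hd.le]
    nlinarith [mul_pos hd ha]
  have hlt_add : √(d ^ 2 + 3 * d * a) < d + 3 * a / 2 := by
    convert Real.sqrt_sq_add_two_mul_lt_s7 hd.le (half_pos (mul_pos three_pos ha)) using 3
    ring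
  constructor <;> linarith

theorem stmt_7 (δ μ σ κ : ℝ) (hδ : 0 < δ) (hμ : 0 < μ) (hσ : 0 < σ) (hκ : 0 < κ) :
    1 / (2 * ((-δ + Real.sqrt (δ ^ 2 + 3 * δ * μ * σ / (κ * (δ + μ)))) / 6)) >
      1 / (2 * (μ * σ / (4 * κ * (δ + μ)))) := by
  set a := μ * σ / (κ * (δ + μ)) with ha_def
  have ha : 0 < a := by positivity
  have h_pc : 3 * δ * μ * σ / (κ * (δ + μ)) = 3 * δ * a := by rw [ha_def]; ring
  have h_od : μ * σ / (4 * κ * (δ + μ)) = a / 4 := by rw [ha_def]; field_simp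
  obtain ⟨hpos, hlt⟩ := centralized_speed_pos_and_lt hδ ha
  rw [h_pc, h_od]
  gcongr
end

section
/- Let δ, μ, σ, κ > 0 and define f(σ) = 2(δ+μ)·(δκ − √(δκ·(δκ + 3μσ/(δ+μ)))) + 3μσ. Then f(0) = 0 and f'(σ) = 3μ·(1 − δκ/√(δκ(δκ + 3μσ/(δ+μ)))) > 0 for all σ > 0; consequently f(σ) > 0 for all σ > 0. -/
/-!
With `a = δκ`, `d = δ + μ` and `x = 3μσ/d`, completing the square gives
`f(σ) = d (√(a + x) - √a)²`, which vanishes at `σ = 0` and is positive for `σ > 0`.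
The derivative is `m (1 - a/√(a(a + x)))` with `m = 3μ`, positive because `a² < a(a + x)`.
-/

open Real

noncomputable def rentGap (a d m σ : ℝ) : ℝ :=
  2 * d * (a - √(a * (a + m * σ / d))) + m * σ

lemma rentGap_zero {a : ℝ} (ha : 0 ≤ a) (d m : ℝ) : rentGap a d m 0 = 0 := by
  simp [rentGap, sqrt_mul_self ha]

lemma rentGap_eq_mul_sq {a d m σ : ℝ} (hd : d ≠ 0) (ha : 0 ≤ a) (hx : 0 ≤ m * σ / d) :
    rentGap a d m σ = d * (√(a + m * σ / d) - √a) ^ 2 := by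
  have hsq : m * σ = d * (m * σ / d) := by field_simp
  rw [rentGap, sub_sq, sq_sqrt (by linarith), sq_sqrt ha, mul_comm a, sqrt_mul (by linarith)]
  linear_combination hsq

lemma hasDerivAt_rentGap {a d m σ : ℝ} (hd : d ≠ 0) (h : 0 < a * (a + m * σ / d)) :
    HasDerivAt (rentGap a d m) (m * (1 - a / √(a * (a + m * σ / d)))) σ := by
  have hinner : HasDerivAt (fun s => a * (a + m * s / d)) (a * (m / d)) σ := by
    simpa [mul_div_right_comm] using
      (((hasDerivAt_id σ).const_mul m).div_const d |>.const_add a).const_mul a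
  have hgap : HasDerivAt (rentGap a d m)
      (2 * d * -(a * (m / d) / (2 * √(a * (a + m * σ / d)))) + m * 1) σ :=
    (((hinner.sqrt h.ne').const_sub a).const_mul (2 * d)).add ((hasDerivAt_id σ).const_mul m)
  refine hgap.congr_deriv ?_
  field_simp
  ring

lemma lt_sqrt_mul_self_add {a x : ℝ} (ha : 0 < a) (hx : 0 < x) : a < √(a * (a + x)) :=
  (lt_sqrt ha.le).2 (by nlinarith)

theorem stmt_14 (δ μ κ : ℝ) (hδ : 0 < δ) (hμ : 0 < μ) (hκ : 0 < κ)
    (f : ℝ → ℝ)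
    (hf : f = fun σ => 2 * (δ + μ) *
        (δ * κ - Real.sqrt (δ * κ * (δ * κ + 3 * μ * σ / (δ + μ)))) + 3 * μ * σ) :
    f 0 = 0 ∧
    (∀ σ > (0:ℝ),
      deriv f σ = 3 * μ *
        (1 - δ * κ / Real.sqrt (δ * κ * (δ * κ + 3 * μ * σ / (δ + μ)))) ∧
      0 < deriv f σ) ∧
    (∀ σ > (0:ℝ), 0 < f σ) := by
  replace hf : f = rentGap (δ * κ) (δ + μ) (3 * μ) := hf
  subst hf
  have ha : 0 < δ * κ := mul_pos hδ hκ
  have hd : 0 < δ + μ := add_pos hδ hμ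
  refine ⟨rentGap_zero ha.le _ _, fun σ hσ => ?_, fun σ hσ => ?_⟩ <;>
    have hx : 0 < 3 * μ * σ / (δ + μ) := by positivity
  · have hlt := lt_sqrt_mul_self_add ha hx
    rw [(hasDerivAt_rentGap hd.ne' (by positivity)).deriv]
    refine ⟨rfl, mul_pos (by positivity) ?_⟩
    rw [sub_pos, div_lt_one (ha.trans hlt)]
    exact hlt
  · rw [rentGap_eq_mul_sq hd.ne' ha.le hx.le]
    have hne : √(δ * κ + 3 * μ * σ / (δ + μ)) - √(δ * κ) ≠ 0 :=
      sub_ne_zero.2 (sqrt_lt_sqrt ha.le (by linarith)).ne'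
    positivity
end
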